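/- Let P be a finite poset, k a field, and P' a convex full subposet of P. For a persistence module M over P', let M̂ denote its extension by zero to P. Then for every natural number n, M admits an interval resolution of length n over P' if and only if M̂ admits an interval resolution of length n over P; consequently the interval resolution dimension of M over P' equals the interval resolution dimension of M̂ over P. -/

import Mathlib

open CategoryTheory CategoryTheory.Limits

attribute [local instance] CategoryTheory.Limits.HasFiniteBiproducts.of_hasFiniteProducts

section Posets

variable {P : Type} [PartialOrder P]

/-- Zigzag connectivity of two elements of a subset `S` of a poset: they are linked by a
zigzag of comparable pairs inside `S`. -/
def ZigzagConnIn (S : Set P) (a b : S) : Prop :=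
  Relation.ReflTransGen (fun u v : S => (u : P) ≤ v ∨ (v : P) ≤ u) a b

/-- A subset of a poset is convex if `x ≤ z ≤ y` with `x, y` in the subset implies `z` is. -/
def IsConvex (S : Set P) : Prop :=
  ∀ ⦃x y z : P⦄, x ∈ S → y ∈ S → x ≤ z → z ≤ y → z ∈ S

/-- An interval of a poset: a nonempty, convex, zigzag-connected subset. -/
def IsIntervalSet (S : Set P) : Prop :=
  S.Nonempty ∧ IsConvex S ∧ ∀ a b : S, ZigzagConnIn S a b

end Posets

section IntervalModules

variable (k : Type) [Field k] {P : Type} [PartialOrder P]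

open Classical in
/-- The linear map between the fibers of the interval module. -/
noncomputable def intervalModuleAux (S : Set P) (p q : P) :
    ↥(if p ∈ S then (⊤ : Submodule k k) else ⊥) →ₗ[k]
      ↥(if q ∈ S then (⊤ : Submodule k k) else ⊥) where
  toFun x := ⟨(if p ∈ S ∧ q ∈ S then (1 : k) else 0) * x.1, by
    by_cases hq : q ∈ S
    · rw [if_pos hq]; exact Submodule.mem_top
    · have hp : ¬ (p ∈ S ∧ q ∈ S) := fun h => hq h.2
      rw [if_neg hp, zero_mul]; exact Submodule.zero_mem _⟩
  map_add' x y := by ext; simp [mul_add]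
  map_smul' c x := by ext; simp

open Classical in
/-- The interval module `k_S` associated to a convex subset `S` of a poset `P`:
it is `k` at points of `S`, `0` elsewhere, with identity structure maps inside `S`. -/
noncomputable def intervalModule (S : Set P) (hS : IsConvex S) : P ⥤ ModuleCat.{0} k where
  obj p := ModuleCat.of k ↥(if p ∈ S then (⊤ : Submodule k k) else ⊥)
  map {p q} _ := ModuleCat.ofHom (intervalModuleAux k S p q)
  map_id p := by
    apply ModuleCat.hom_ext
    apply LinearMap.ext
    rintro ⟨x, hx⟩
    apply Subtype.ext
    show (if p ∈ S ∧ p ∈ S then (1 : k) else 0) * x = x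
    by_cases hp : p ∈ S
    · simp [hp]
    · rw [if_neg hp] at hx
      simp [hp, (Submodule.mem_bot k).mp hx]
  map_comp {p q r} f g := by
    apply ModuleCat.hom_ext
    apply LinearMap.ext
    rintro ⟨x, hx⟩
    apply Subtype.ext
    show (if p ∈ S ∧ r ∈ S then (1 : k) else 0) * x
      = (if q ∈ S ∧ r ∈ S then (1 : k) else 0) * ((if p ∈ S ∧ q ∈ S then (1 : k) else 0) * x)
    by_cases hp : p ∈ S
    · by_cases hr : r ∈ S
      · have hq : q ∈ S := hS hp hr (leOfHom f) (leOfHom g)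
        simp [hp, hq, hr]
      · simp [hr]
    · rw [if_neg hp] at hx
      simp [(Submodule.mem_bot k).mp hx]

/-- A persistence module is an interval module if it is isomorphic to `k_S` for some
interval `S`. -/
def IsIntervalModule (M : P ⥤ ModuleCat.{0} k) : Prop :=
  ∃ (S : Set P) (hS : IsIntervalSet S), Nonempty (M ≅ intervalModule k S hS.2.1)

/-- A persistence module is interval-decomposable if it is isomorphic to a finite direct sum
of interval modules. -/
def IsIntervalDecomposable (M : P ⥤ ModuleCat.{0} k) : Prop :=
  ∃ (n : ℕ) (J : Fin n → (P ⥤ ModuleCat.{0} k)),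
    (∀ i, IsIntervalModule k (J i)) ∧ Nonempty (M ≅ ⨁ J)

/-- The support of a persistence module. -/
def moduleSupport (M : P ⥤ ModuleCat.{0} k) : Set P := {p : P | ¬ IsZero (M.obj p)}

/-- A persistence module valued in finite-dimensional vector spaces. -/
def PointwiseFinite (M : P ⥤ ModuleCat.{0} k) : Prop :=
  ∀ p : P, FiniteDimensional k (M.obj p)

end IntervalModules

section Approximations

variable {C : Type*} [Category C]

/-- `f : X ⟶ M` is a right `𝒳`-approximation of `M` if `X ∈ 𝒳` and every morphism
from an object of `𝒳` to `M` factors through `f`. -/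
def IsRightApproximation (𝒳 : C → Prop) {X M : C} (f : X ⟶ M) : Prop :=
  𝒳 X ∧ ∀ ⦃Y : C⦄ (g : Y ⟶ M), 𝒳 Y → ∃ h : Y ⟶ X, h ≫ f = g

/-- `f : X ⟶ M` is right minimal if every endomorphism `g` of `X` with `f ∘ g = f`
is an isomorphism. -/
def IsRightMinimal {X M : C} (f : X ⟶ M) : Prop :=
  ∀ g : X ⟶ X, g ≫ f = f → IsIso g

end Approximations

/-- An interval cover: a right minimal approximation by interval-decomposable modules. -/
def IsIntervalCover (k : Type) [Field k] {P : Type} [PartialOrder P]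
    {X M : P ⥤ ModuleCat.{0} k} (f : X ⟶ M) : Prop :=
  IsRightApproximation (IsIntervalDecomposable k) f ∧ IsRightMinimal f

section Resolutions

variable {C : Type*} [Category C] [Limits.HasZeroMorphisms C]

/-- `M` admits a resolution `0 ⟶ J_n ⟶ ⋯ ⟶ J_1 ⟶ J_0 ⟶ M ⟶ 0` of length `n` by objects
of `𝒳`: an exact sequence in which every `J_i` lies in `𝒳`.  (The data is encoded by an
`ℕ`-indexed complex which vanishes in degrees `> n` and is exact everywhere.) -/
def HasResolutionOfLength (𝒳 : C → Prop) (n : ℕ) (M : C) : Prop :=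
  ∃ (J : ℕ → C) (d : ∀ i, J (i + 1) ⟶ J i) (f : J 0 ⟶ M) (w0 : d 0 ≫ f = 0)
    (w : ∀ i, d (i + 1) ≫ d i = 0),
    (∀ i, i ≤ n → 𝒳 (J i)) ∧ (∀ i, n < i → IsZero (J i)) ∧
    Epi f ∧ (ShortComplex.mk (d 0) f w0).Exact ∧
    ∀ i, (ShortComplex.mk (d (i + 1)) (d i) (w i)).Exact

end Resolutions

section ExtensionByZero

variable (k : Type) [Field k] {P : Type} [PartialOrder P] (P' : Set P)

open Classical in
/-- Fibers of the extension by zero. -/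
noncomputable def extObj (M : ↥P' ⥤ ModuleCat.{0} k) (p : P) : ModuleCat.{0} k :=
  if h : p ∈ P' then M.obj ⟨p, h⟩ else ModuleCat.of k PUnit

lemma extObj_pos (M : ↥P' ⥤ ModuleCat.{0} k) {p : P} (hp : p ∈ P') :
    extObj k P' M p = M.obj ⟨p, hp⟩ := dif_pos hp

lemma extObj_isZero (M : ↥P' ⥤ ModuleCat.{0} k) {p : P} (hp : p ∉ P') :
    CategoryTheory.Limits.IsZero (extObj k P' M p) := by
  rw [extObj, dif_neg hp]
  exact ModuleCat.isZero_of_subsingleton _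

open Classical in
/-- Structure maps of the extension by zero. -/
noncomputable def extMap (M : ↥P' ⥤ ModuleCat.{0} k) (p q : P) (hpq : p ≤ q) :
    extObj k P' M p ⟶ extObj k P' M q :=
  if hp : p ∈ P' then
    if hq : q ∈ P' then
      eqToHom (extObj_pos k P' M hp) ≫
        M.map (homOfLE (show (⟨p, hp⟩ : ↥P') ≤ ⟨q, hq⟩ from hpq)) ≫
          eqToHom (extObj_pos k P' M hq).symm
    else 0
  else 0

lemma extMap_id (M : ↥P' ⥤ ModuleCat.{0} k) (p : P) (h : p ≤ p) :
    extMap k P' M p p h = 𝟙 (extObj k P' M p) := by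
  by_cases hp : p ∈ P'
  · simp only [extMap, dif_pos hp]
    have : homOfLE (show (⟨p, hp⟩ : ↥P') ≤ ⟨p, hp⟩ from h) = 𝟙 _ := Subsingleton.elim _ _
    rw [this, M.map_id]
    simp
  · simp only [extMap, dif_neg hp]
    exact (extObj_isZero k P' M hp).eq_of_src _ _

lemma extMap_comp (hconv : IsConvex P') (M : ↥P' ⥤ ModuleCat.{0} k) (p q r : P)
    (hpq : p ≤ q) (hqr : q ≤ r) :
    extMap k P' M p r (hpq.trans hqr) = extMap k P' M p q hpq ≫ extMap k P' M q r hqr := by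
  by_cases hp : p ∈ P'
  · by_cases hr : r ∈ P'
    · have hq : q ∈ P' := hconv hp hr hpq hqr
      simp only [extMap, dif_pos hp, dif_pos hq, dif_pos hr]
      have : homOfLE (show (⟨p, hp⟩ : ↥P') ≤ ⟨r, hr⟩ from hpq.trans hqr) =
          homOfLE (show (⟨p, hp⟩ : ↥P') ≤ ⟨q, hq⟩ from hpq) ≫
            homOfLE (show (⟨q, hq⟩ : ↥P') ≤ ⟨r, hr⟩ from hqr) := Subsingleton.elim _ _
      rw [this, M.map_comp]
      simp
    · by_cases hq : q ∈ P'
      · simp only [extMap, dif_pos hp, dif_pos hq, dif_neg hr]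
        simp
      · simp only [extMap, dif_pos hp, dif_neg hq, dif_neg hr]
        simp
  · simp only [extMap, dif_neg hp]
    exact (extObj_isZero k P' M hp).eq_of_src _ _

/-- The extension by zero of a persistence module over a convex full subposet `P'` of `P`:
it agrees with `M` on `P'` and vanishes outside of `P'`. -/
noncomputable def extendByZero (hconv : IsConvex P') (M : ↥P' ⥤ ModuleCat.{0} k) :
    P ⥤ ModuleCat.{0} k where
  obj p := extObj k P' M p
  map {p q} f := extMap k P' M p q (leOfHom f)
  map_id p := extMap_id k P' M p le_rfl
  map_comp {p q r} f g := extMap_comp k P' hconv M p q r (leOfHom f) (leOfHom g)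

open Classical in
/-- The components of the extension by zero of a morphism. -/
noncomputable def extHomApp {X M : ↥P' ⥤ ModuleCat.{0} k} (f : X ⟶ M) (p : P) :
    extObj k P' X p ⟶ extObj k P' M p :=
  if hp : p ∈ P' then
    eqToHom (extObj_pos k P' X hp) ≫ f.app ⟨p, hp⟩ ≫ eqToHom (extObj_pos k P' M hp).symm
  else 0

/-- The extension by zero of a morphism of persistence modules over a convex full
subposet. -/
noncomputable def extendByZeroHom (hconv : IsConvex P') {X M : ↥P' ⥤ ModuleCat.{0} k}
    (f : X ⟶ M) : extendByZero k P' hconv X ⟶ extendByZero k P' hconv M where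
  app p := extHomApp k P' f p
  naturality p q g := by
    show extMap k P' X p q (leOfHom g) ≫ extHomApp k P' f q =
      extHomApp k P' f p ≫ extMap k P' M p q (leOfHom g)
    by_cases hq : q ∈ P'
    · by_cases hp : p ∈ P'
      · simp only [extMap, extHomApp, dif_pos hp, dif_pos hq]
        simp only [CategoryTheory.Category.assoc, CategoryTheory.eqToHom_trans_assoc,
          CategoryTheory.eqToHom_refl, CategoryTheory.Category.id_comp]
        rw [CategoryTheory.NatTrans.naturality_assoc]
      · exact (extObj_isZero k P' X hp).eq_of_src _ _
    · exact ((extObj_isZero k P' M hq).eq_of_tgt _ _)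

end ExtensionByZero


/-!
Extension by zero `M ↦ M̂` and restriction `N ↦ N|_{P'}` are exact additive functors, and
`M̂|_{P'} ≅ M`. So it suffices that both preserve interval-decomposability. Extension by zero
sends `k_S` to `k_S` viewed in `P`: by convexity of `P'`, an interval of `P'` stays an interval
of `P`. Restriction sends `k_I` to `k_{I ∩ P'}`; the set `I ∩ P'` is convex but may be
disconnected, and then `k_{I ∩ P'}` is the direct sum of the interval modules of its finitely
many zigzag components, since no comparable pair joins two different components.
-/

namespace HasResolutionOfLength

variable {C D : Type*} [Category C] [Category D] {𝒳 : C → Prop} {n : ℕ}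

lemma of_iso [HasZeroMorphisms C] {M N : C} (h : HasResolutionOfLength 𝒳 n M) (e : M ≅ N) :
    HasResolutionOfLength 𝒳 n N := by
  obtain ⟨J, d, f, w0, w, hJ, hz, hf, hex0, hex⟩ := h
  refine ⟨J, d, f ≫ e.hom, by rw [reassoc_of% w0, zero_comp], w, hJ, hz, epi_comp _ _, ?_, hex⟩
  exact ShortComplex.exact_of_iso (S₁ := ShortComplex.mk _ _ w0)
    (ShortComplex.isoMk (Iso.refl _) (Iso.refl _) e (by simp) (by simp)) hex0

lemma map [Preadditive C] [Preadditive D] [HasZeroObject C] [HasZeroObject D] {𝒴 : D → Prop}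
    (F : C ⥤ D) [F.PreservesZeroMorphisms] [F.PreservesHomology]
    (hF : ∀ X, 𝒳 X → 𝒴 (F.obj X)) {M : C} (h : HasResolutionOfLength 𝒳 n M) :
    HasResolutionOfLength 𝒴 n (F.obj M) := by
  obtain ⟨J, d, f, w0, w, hJ, hz, hf, hex0, hex⟩ := h
  exact ⟨fun i => F.obj (J i), fun i => F.map (d i), F.map f,
    by rw [← F.map_comp, w0, F.map_zero], fun i => by rw [← F.map_comp, w i, F.map_zero],
    fun i hi => hF _ (hJ i hi), fun i hi => F.map_isZero (hz i hi), F.map_epi f,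
    hex0.map F, fun i => (hex i).map F⟩

end HasResolutionOfLength

lemma CategoryTheory.ShortComplex.exact_iff_forall_evaluation {J C : Type*} [Category J]
    [Category C] [Abelian C] (S : ShortComplex (J ⥤ C)) :
    S.Exact ↔ ∀ j, (S.map ((evaluation J C).obj j)).Exact := by
  refine ⟨fun hS j => hS.map _, fun h => ?_⟩
  rw [S.exact_iff_isZero_homology, Functor.isZero_iff]
  exact fun j => (S.mapHomologyIso _).isZero_iff.1 (((S.map _).exact_iff_isZero_homology).1 (h j))

section Posets

variable {Q : Type} [PartialOrder Q]

lemma IsConvex.preimage {R : Type} [PartialOrder R] {f : Q → R} (hf : Monotone f) {S : Set R}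
    (hS : IsConvex S) : IsConvex (f ⁻¹' S) :=
  fun _ _ _ hx hy hxz hzy => hS hx hy (hf hxz) (hf hzy)

lemma IsIntervalSet.image_val {P' : Set Q} (hconv : IsConvex P') {S : Set ↥P'}
    (hS : IsIntervalSet S) : IsIntervalSet (Subtype.val '' S : Set Q) := by
  obtain ⟨⟨a, ha⟩, hSconv, hSconn⟩ := hS
  refine ⟨⟨a, a, ha, rfl⟩, ?_, ?_⟩
  · rintro x y z ⟨x, hx, rfl⟩ ⟨y, hy, rfl⟩ hxz hzy
    exact ⟨⟨z, hconv x.2 y.2 hxz hzy⟩, hSconv hx hy hxz hzy, rfl⟩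
  · rintro ⟨_, x, hx, rfl⟩ ⟨_, y, hy, rfl⟩
    exact Relation.ReflTransGen.lift
      (fun u : ↥S => (⟨u.1.1, u.1, u.2, rfl⟩ : ↥(Subtype.val '' S)))
      (r := fun u v : ↥S => (u : ↥P') ≤ v ∨ (v : ↥P') ≤ u) (fun _ _ => id) _ _
      (hSconn ⟨x, hx⟩ ⟨y, hy⟩)

variable {T : Set Q}

def zigzagSetoid (T : Set Q) : Setoid T where
  r := ZigzagConnIn T
  iseqv := by
    refine ⟨fun _ => .refl, fun h => ?_, .trans⟩
    induction h with
    | refl => exact .refl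
    | tail _ hbc ih => exact .head hbc.symm ih

def zigzagComponent (T : Set Q) (c : Quotient (zigzagSetoid T)) : Set Q :=
  {q | ∃ h : q ∈ T, ⟦⟨q, h⟩⟧ = c}

variable {c : Quotient (zigzagSetoid T)}

lemma zigzagComponent_subset : zigzagComponent T c ⊆ T :=
  fun _ ⟨h, _⟩ => h

lemma mem_zigzagComponent {q : Q} (hq : q ∈ T) : q ∈ zigzagComponent T c ↔ ⟦⟨q, hq⟩⟧ = c :=
  ⟨fun ⟨_, e⟩ => e, fun e => ⟨hq, e⟩⟩

lemma eq_of_mem_zigzagComponent {q : Q} {c' : Quotient (zigzagSetoid T)}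
    (h : q ∈ zigzagComponent T c) (h' : q ∈ zigzagComponent T c') : c = c' :=
  h.2.symm.trans h'.2

lemma mem_zigzagComponent_iff_of_le {p q : Q} (hpq : p ≤ q) (hp : p ∈ T) (hq : q ∈ T) :
    p ∈ zigzagComponent T c ↔ q ∈ zigzagComponent T c := by
  rw [mem_zigzagComponent hp, mem_zigzagComponent hq,
    Quotient.sound (s := zigzagSetoid T) (a := ⟨p, hp⟩) (b := ⟨q, hq⟩) (.single (Or.inl hpq))]

lemma zigzagComponent_convex (hT : IsConvex T) (c : Quotient (zigzagSetoid T)) :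
    IsConvex (zigzagComponent T c) := by
  rintro x y z ⟨hx, rfl⟩ ⟨hy, -⟩ hxz hzy
  exact (mem_zigzagComponent_iff_of_le hxz hx (hT hx hy hxz hzy)).1 ⟨hx, rfl⟩

lemma ZigzagConnIn.to_zigzagComponent {u v : T} (h : ZigzagConnIn T u v)
    (hu : (u : Q) ∈ zigzagComponent T c) :
    ∃ hv : (v : Q) ∈ zigzagComponent T c, ZigzagConnIn (zigzagComponent T c) ⟨u, hu⟩ ⟨v, hv⟩ := by
  induction h with
  | refl => exact ⟨hu, .refl⟩
  | @tail a b _ hab ih =>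
    obtain ⟨ha, hua⟩ := ih
    have hb : (b : Q) ∈ zigzagComponent T c := by
      rcases hab with hab | hba
      · exact (mem_zigzagComponent_iff_of_le hab a.2 b.2).1 ha
      · exact (mem_zigzagComponent_iff_of_le hba b.2 a.2).2 ha
    exact ⟨hb, hua.tail hab⟩

lemma zigzagComponent_isIntervalSet (hT : IsConvex T) (c : Quotient (zigzagSetoid T)) :
    IsIntervalSet (zigzagComponent T c) := by
  obtain ⟨a, rfl⟩ := Quotient.exists_rep c
  refine ⟨⟨a, a.2, rfl⟩, zigzagComponent_convex hT _, ?_⟩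
  rintro ⟨x, hxT, hx⟩ ⟨y, hyT, hy⟩
  have hxy : ZigzagConnIn T ⟨x, hxT⟩ ⟨y, hyT⟩ := Quotient.exact (hx.trans hy.symm)
  exact (hxy.to_zigzagComponent ⟨hxT, hx⟩).2

end Posets

section IntervalModules

open Classical

variable (k : Type) [Field k] {Q : Type} [PartialOrder Q]

lemma intervalModule_congr {S₁ S₂ : Set Q} (h : S₁ = S₂) (h₁ : IsConvex S₁) (h₂ : IsConvex S₂) :
    intervalModule k S₁ h₁ = intervalModule k S₂ h₂ := by
  subst h; rfl

variable {k}

abbrev intervalModule.val {S : Set Q} {hS : IsConvex S} {q : Q}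
    (y : (intervalModule k S hS).obj q) : k :=
  Subtype.val (p := (· ∈ if q ∈ S then (⊤ : Submodule k k) else ⊥)) y

lemma intervalModule.val_eq_zero {S : Set Q} {hS : IsConvex S} {q : Q} (hq : q ∉ S)
    (y : (intervalModule k S hS).obj q) : intervalModule.val y = 0 := by
  have hy := y.2
  simp only [if_neg hq] at hy
  exact (Submodule.mem_bot k).1 hy

@[simp]
lemma intervalModule.val_zero {S : Set Q} {hS : IsConvex S} {q : Q} :
    intervalModule.val (0 : (intervalModule k S hS).obj q) = 0 :=
  rfl

@[simp]
lemma intervalModule.val_sum {S : Set Q} {hS : IsConvex S} {q : Q} {ι : Type*} (s : Finset ι)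
    (y : ι → (intervalModule k S hS).obj q) :
    intervalModule.val (∑ i ∈ s, y i) = ∑ i ∈ s, intervalModule.val (y i) :=
  Submodule.coe_sum _ _ _

lemma intervalModule_obj_isZero {S : Set Q} (hS : IsConvex S) {q : Q} (hq : q ∉ S) :
    IsZero ((intervalModule k S hS).obj q) :=
  @ModuleCat.isZero_of_subsingleton k _ _ ⟨fun x y => Subtype.ext <|
    (intervalModule.val_eq_zero hq x).trans (intervalModule.val_eq_zero hq y).symm⟩

lemma intervalModule_hom_ext {X : Q ⥤ ModuleCat.{0} k} {S : Set Q} {hS : IsConvex S}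
    {f g : X ⟶ intervalModule k S hS}
    (h : ∀ q x, intervalModule.val ((f.app q).hom x) = intervalModule.val ((g.app q).hom x)) :
    f = g := by
  ext q x
  exact Subtype.ext (h q x)

variable (k)

/-- The morphism `k_U ⟶ k_V` which is the identity of `k` at the points of `U ∩ V`; the
hypothesis `hUV` is exactly its naturality. -/
noncomputable def intervalModuleHom {U V : Set Q} (hU : IsConvex U) (hV : IsConvex V)
    (hUV : ∀ ⦃p q : Q⦄, p ≤ q → p ∈ U → q ∈ V → (q ∈ U ↔ p ∈ V)) :
    intervalModule k U hU ⟶ intervalModule k V hV where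
  app q := ModuleCat.ofHom
    { toFun x := ⟨if q ∈ V then x.1 else 0, by
        by_cases h : q ∈ V
        · simp only [if_pos h, Submodule.mem_top]
        · simp only [if_neg h]
          exact Submodule.zero_mem _⟩
      map_add' x y := by ext; split_ifs <;> simp
      map_smul' c x := by ext; split_ifs <;> simp }
  naturality p q f := by
    ext ⟨x, hx⟩ : 2
    apply Subtype.ext
    change (if q ∈ V then (if p ∈ U ∧ q ∈ U then (1 : k) else 0) * x else 0) =
      (if p ∈ V ∧ q ∈ V then (1 : k) else 0) * (if p ∈ V then x else 0)
    by_cases hp : p ∈ U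
    · by_cases hq : q ∈ V
      · by_cases hpV : p ∈ V <;> simp [hp, hq, hpV, hUV (leOfHom f) hp hq]
      · simp [hq]
    · simp [show x = 0 from intervalModule.val_eq_zero (hS := hU) hp ⟨x, hx⟩]

@[simp]
lemma intervalModuleHom_app_val {U V : Set Q} (hU : IsConvex U) (hV : IsConvex V)
    (hUV : ∀ ⦃p q : Q⦄, p ≤ q → p ∈ U → q ∈ V → (q ∈ U ↔ p ∈ V)) (q : Q)
    (x : (intervalModule k U hU).obj q) :
    intervalModule.val (((intervalModuleHom k hU hV hUV).app q).hom x) =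
      if q ∈ V then intervalModule.val x else 0 :=
  rfl

end IntervalModules

section IntervalDecomposable

variable {k : Type} [Field k] {Q : Type} [PartialOrder Q]

lemma IsIntervalDecomposable.of_iso {M N : Q ⥤ ModuleCat.{0} k} (e : M ≅ N)
    (h : IsIntervalDecomposable k N) : IsIntervalDecomposable k M := by
  obtain ⟨n, J, hJ, ⟨e'⟩⟩ := h
  exact ⟨n, J, hJ, ⟨e ≪≫ e'⟩⟩

lemma IsIntervalDecomposable.of_iso_biproduct {ι : Type} [Finite ι] {M : Q ⥤ ModuleCat.{0} k}
    (J : ι → (Q ⥤ ModuleCat.{0} k)) (hJ : ∀ i, IsIntervalModule k (J i)) (e : M ≅ ⨁ J) :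
    IsIntervalDecomposable k M :=
  let ε := (Finite.equivFin ι).symm
  ⟨Nat.card ι, J ∘ ε, fun _ => hJ _, ⟨e ≪≫ (biproduct.reindex ε J).symm⟩⟩

lemma IsIntervalModule.isIntervalDecomposable {M : Q ⥤ ModuleCat.{0} k}
    (h : IsIntervalModule k M) : IsIntervalDecomposable k M :=
  .of_iso_biproduct (fun _ : Unit => M) (fun _ => h) (biproductUniqueIso fun _ : Unit => M).symm

lemma IsIntervalDecomposable.biproduct {ι : Type} [Finite ι] (N : ι → (Q ⥤ ModuleCat.{0} k))
    (h : ∀ i, IsIntervalDecomposable k (N i)) : IsIntervalDecomposable k (⨁ N) := by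
  choose m K hK e using h
  exact .of_iso_biproduct (fun s : Σ i, Fin (m i) => K s.1 s.2) (fun _ => hK _ _)
    (biproduct.mapIso (fun i => (e i).some) ≪≫ biproductBiproductIso _ _)

lemma IsIntervalDecomposable.map {R : Type} [PartialOrder R]
    (F : (Q ⥤ ModuleCat.{0} k) ⥤ (R ⥤ ModuleCat.{0} k)) [F.Additive]
    (hF : ∀ M, IsIntervalModule k M → IsIntervalDecomposable k (F.obj M))
    {M : Q ⥤ ModuleCat.{0} k} (h : IsIntervalDecomposable k M) :
    IsIntervalDecomposable k (F.obj M) := by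
  obtain ⟨n, J, hJ, ⟨e⟩⟩ := h
  exact .of_iso (F.mapIso e ≪≫ F.mapBiproduct J) (.biproduct _ fun i => hF _ (hJ i))

variable (k)

noncomputable def zigzagComponentProj {T : Set Q} (hT : IsConvex T)
    (c : Quotient (zigzagSetoid T)) :
    intervalModule k T hT ⟶ intervalModule k (zigzagComponent T c) (zigzagComponent_convex hT c) :=
  intervalModuleHom k _ _ fun _ _ hpq hp hq =>
    ⟨fun _ => (mem_zigzagComponent_iff_of_le hpq hp (zigzagComponent_subset hq)).2 hq,
      fun _ => zigzagComponent_subset hq⟩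

noncomputable def zigzagComponentIncl {T : Set Q} (hT : IsConvex T)
    (c : Quotient (zigzagSetoid T)) :
    intervalModule k (zigzagComponent T c) (zigzagComponent_convex hT c) ⟶ intervalModule k T hT :=
  intervalModuleHom k _ _ fun _ _ hpq hp hq =>
    ⟨fun _ => zigzagComponent_subset hp,
      fun _ => (mem_zigzagComponent_iff_of_le hpq (zigzagComponent_subset hp) hq).1 hp⟩

open Classical in
noncomputable def zigzagComponentBicone {T : Set Q} (hT : IsConvex T) :
    Bicone fun c => intervalModule k (zigzagComponent T c) (zigzagComponent_convex hT c) where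
  pt := intervalModule k T hT
  π := zigzagComponentProj k hT
  ι := zigzagComponentIncl k hT
  ι_π c c' := by
    refine intervalModule_hom_ext fun q x => ?_
    split_ifs with h
    · subst h
      by_cases hq : q ∈ zigzagComponent T c
      · simp [zigzagComponentProj, zigzagComponentIncl, hq, zigzagComponent_subset hq]
      · simp [zigzagComponentProj, zigzagComponentIncl, intervalModule.val_eq_zero hq]
    · by_cases hq : q ∈ zigzagComponent T c
      · have hq' : q ∉ zigzagComponent T c' := fun hq' => h (eq_of_mem_zigzagComponent hq hq')
        simp [zigzagComponentProj, zigzagComponentIncl, hq']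
      · simp [zigzagComponentProj, zigzagComponentIncl, intervalModule.val_eq_zero hq]

open Classical in
lemma sum_zigzagComponentProj_comp_incl {T : Set Q} (hT : IsConvex T)
    [Fintype (Quotient (zigzagSetoid T))] :
    ∑ c, zigzagComponentProj k hT c ≫ zigzagComponentIncl k hT c = 𝟙 _ := by
  refine intervalModule_hom_ext fun q x => ?_
  by_cases hq : q ∈ T
  · simp [zigzagComponentProj, zigzagComponentIncl, hq, mem_zigzagComponent hq,
      Finset.sum_ite_eq]
  · simp [zigzagComponentProj, zigzagComponentIncl, intervalModule.val_eq_zero hq]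

lemma intervalModule_isIntervalDecomposable [Finite Q] {T : Set Q} (hT : IsConvex T) :
    IsIntervalDecomposable k (intervalModule k T hT) :=
  have := Fintype.ofFinite (Quotient (zigzagSetoid T))
  .of_iso_biproduct _ (fun c => ⟨_, zigzagComponent_isIntervalSet hT c, ⟨Iso.refl _⟩⟩)
    (biproduct.uniqueUpToIso _ (isBilimitOfTotal (zigzagComponentBicone k hT)
      (sum_zigzagComponentProj_comp_incl k hT)))

end IntervalDecomposable

section ExtensionByZero

variable (k : Type) [Field k] {P : Type} [PartialOrder P] (P' : Set P) (hconv : IsConvex P')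

abbrev restrictFunctor : (P ⥤ ModuleCat.{0} k) ⥤ (↥P' ⥤ ModuleCat.{0} k) :=
  (Functor.whiskeringLeft ↥P' P (ModuleCat.{0} k)).obj (Subtype.mono_coe (· ∈ P')).functor

lemma extHomApp_id (M : ↥P' ⥤ ModuleCat.{0} k) (p : P) :
    extHomApp k P' (𝟙 M) p = 𝟙 (extObj k P' M p) := by
  by_cases hp : p ∈ P'
  · simp [extHomApp, dif_pos hp]
  · exact (extObj_isZero k P' M hp).eq_of_src _ _

lemma extHomApp_comp {X Y Z : ↥P' ⥤ ModuleCat.{0} k} (f : X ⟶ Y) (g : Y ⟶ Z) (p : P) :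
    extHomApp k P' (f ≫ g) p = extHomApp k P' f p ≫ extHomApp k P' g p := by
  by_cases hp : p ∈ P'
  · simp [extHomApp, dif_pos hp]
  · exact (extObj_isZero k P' X hp).eq_of_src _ _

noncomputable def extendByZeroFunctor : (↥P' ⥤ ModuleCat.{0} k) ⥤ (P ⥤ ModuleCat.{0} k) where
  obj := extendByZero k P' hconv
  map := extendByZeroHom k P' hconv
  map_id M := by ext1; funext p; exact extHomApp_id k P' M p
  map_comp f g := by ext1; funext p; exact extHomApp_comp k P' f g p

instance : (extendByZeroFunctor k P' hconv).Additive where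
  map_add {X Y f g} := by
    ext1; funext p
    change extHomApp k P' (f + g) p = extHomApp k P' f p + extHomApp k P' g p
    by_cases hp : p ∈ P'
    · simp [extHomApp, dif_pos hp]
    · exact (extObj_isZero k P' X hp).eq_of_src _ _

noncomputable def extendByZeroEvaluationIso {p : P} (hp : p ∈ P') :
    extendByZeroFunctor k P' hconv ⋙ (evaluation P (ModuleCat.{0} k)).obj p ≅
      (evaluation ↥P' (ModuleCat.{0} k)).obj ⟨p, hp⟩ :=
  NatIso.ofComponents (fun M => eqToIso (extObj_pos k P' M hp)) fun {X Y} f => by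
    change extHomApp k P' f p ≫ eqToHom (extObj_pos k P' Y hp) =
      eqToHom (extObj_pos k P' X hp) ≫ f.app ⟨p, hp⟩
    simp [extHomApp, dif_pos hp]

instance : (extendByZeroFunctor k P' hconv).PreservesHomology :=
  Functor.preservesHomology_of_map_exact _ fun S hS =>
    (S.map _).exact_iff_forall_evaluation.2 fun p => by
      by_cases hp : p ∈ P'
      · exact ShortComplex.exact_of_iso (S.mapNatIso (extendByZeroEvaluationIso k P' hconv hp)).symm
          (S.exact_iff_forall_evaluation.1 hS ⟨p, hp⟩)
      · exact ShortComplex.exact_of_isZero_X₂ _ (extObj_isZero k P' _ hp)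

noncomputable def restrictExtendByZeroIso (M : ↥P' ⥤ ModuleCat.{0} k) :
    (restrictFunctor k P').obj (extendByZero k P' hconv M) ≅ M :=
  NatIso.ofComponents (fun q => eqToIso (extObj_pos k P' M q.2)) fun {a b} f => by
    change extMap k P' M a b (leOfHom f) ≫ eqToHom (extObj_pos k P' M b.2) =
      eqToHom (extObj_pos k P' M a.2) ≫ M.map f
    simp [extMap]
    rfl

-- `extObj_pos` with the target written as `N.obj p`, so that `eqToIso` of it composes
-- syntactically with the structure maps of `N`.
lemma extObj_restrictFunctor_obj (N : P ⥤ ModuleCat.{0} k) {p : P} (hp : p ∈ P') :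
    extObj k P' ((restrictFunctor k P').obj N) p = N.obj p :=
  extObj_pos k P' _ hp

variable {P'} in
open Classical in
noncomputable def extendByZeroRestrictIsoApp {N : P ⥤ ModuleCat.{0} k}
    (hN : ∀ p ∉ P', IsZero (N.obj p)) (p : P) :
    extObj k P' ((restrictFunctor k P').obj N) p ≅ N.obj p :=
  if hp : p ∈ P' then eqToIso (extObj_restrictFunctor_obj k P' N hp)
  else (extObj_isZero k P' _ hp).iso (hN p hp)

variable {P'} in
lemma extendByZeroRestrictIsoApp_of_mem {N : P ⥤ ModuleCat.{0} k}
    (hN : ∀ p ∉ P', IsZero (N.obj p)) {p : P} (hp : p ∈ P') :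
    extendByZeroRestrictIsoApp k hN p = eqToIso (extObj_restrictFunctor_obj k P' N hp) :=
  dif_pos hp

noncomputable def extendByZeroRestrictIso (N : P ⥤ ModuleCat.{0} k)
    (hN : ∀ p ∉ P', IsZero (N.obj p)) :
    extendByZero k P' hconv ((restrictFunctor k P').obj N) ≅ N :=
  NatIso.ofComponents (extendByZeroRestrictIsoApp k hN) fun {p q} f => by
    change extMap k P' _ p q (leOfHom f) ≫ (extendByZeroRestrictIsoApp k hN q).hom =
      (extendByZeroRestrictIsoApp k hN p).hom ≫ N.map f
    by_cases hq : q ∈ P'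
    · by_cases hp : p ∈ P'
      · rw [extendByZeroRestrictIsoApp_of_mem k hN hp, extendByZeroRestrictIsoApp_of_mem k hN hq]
        simp only [extMap, dif_pos hp, dif_pos hq, eqToIso.hom, Category.assoc, eqToHom_trans]
        rfl
      · exact (extObj_isZero k P' _ hp).eq_of_src _ _
    · exact (hN q hq).eq_of_tgt _ _

end ExtensionByZero

section Transfer

variable (k : Type) [Field k] {P : Type} [PartialOrder P] {P' : Set P} (hconv : IsConvex P')

lemma isIntervalModule_extendByZero {S : Set ↥P'} (hS : IsIntervalSet S) :
    IsIntervalModule k (extendByZero k P' hconv (intervalModule k S hS.2.1)) := by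
  have hS' := hS.image_val hconv
  refine ⟨_, hS', ⟨eqToIso ?_ ≪≫ extendByZeroRestrictIso k P' hconv _ fun p hp => ?_⟩⟩
  · exact congrArg (extendByZero k P' hconv)
      (intervalModule_congr k (Set.preimage_image_eq S Subtype.val_injective)
        (hS'.2.1.preimage (Subtype.mono_coe (· ∈ P'))) _).symm
  · exact intervalModule_obj_isZero _ fun ⟨x, _, hx⟩ => hp (hx ▸ x.2)

lemma IsIntervalDecomposable.extendByZero {M : ↥P' ⥤ ModuleCat.{0} k}
    (h : IsIntervalDecomposable k M) :
    IsIntervalDecomposable k (_root_.extendByZero k P' hconv M) :=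
  h.map (extendByZeroFunctor k P' hconv) fun _ ⟨_, hS, ⟨e⟩⟩ =>
    (isIntervalModule_extendByZero k hconv hS).isIntervalDecomposable.of_iso
      ((extendByZeroFunctor k P' hconv).mapIso e)

variable (P') in
lemma IsIntervalDecomposable.restrict [Finite P] {N : P ⥤ ModuleCat.{0} k}
    (h : IsIntervalDecomposable k N) : IsIntervalDecomposable k ((restrictFunctor k P').obj N) :=
  h.map (restrictFunctor k P') fun _ ⟨_, hS, ⟨e⟩⟩ =>
    (intervalModule_isIntervalDecomposable k (hS.2.1.preimage (Subtype.mono_coe (· ∈ P')))).of_iso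
      ((restrictFunctor k P').mapIso e)

end Transfer

theorem intervalResolution_extendByZero_general
    (k : Type) [Field k] (P : Type) [PartialOrder P] [Finite P]
    (P' : Set P) (hconv : IsConvex P')
    (M : ↥P' ⥤ ModuleCat.{0} k) :
    (∀ n : ℕ, HasResolutionOfLength (IsIntervalDecomposable k) n M ↔
      HasResolutionOfLength (IsIntervalDecomposable k) n (extendByZero k P' hconv M)) ∧
    sInf {n : ℕ | HasResolutionOfLength (IsIntervalDecomposable k) n M} =
      sInf {n : ℕ |
        HasResolutionOfLength (IsIntervalDecomposable k) n (extendByZero k P' hconv M)} := by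
  have hiff : ∀ n : ℕ, HasResolutionOfLength (IsIntervalDecomposable k) n M ↔
      HasResolutionOfLength (IsIntervalDecomposable k) n (extendByZero k P' hconv M) := fun n =>
    ⟨fun h => h.map (extendByZeroFunctor k P' hconv) fun _ => .extendByZero k hconv,
      fun h => (h.map (restrictFunctor k P') fun _ => .restrict k P').of_iso
        (restrictExtendByZeroIso k P' hconv M)⟩
  exact ⟨hiff, congrArg sInf (Set.ext hiff)⟩

/-- For a convex full subposet `P'` of `P` and a persistence module `M` over
`P'`, `M` admits an interval resolution of length `n` over `P'` if and only if its extension by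
zero admits one of length `n` over `P`; consequently the interval resolution dimensions
agree. -/
theorem intervalResolution_extendByZero
    (k : Type) [Field k] (P : Type) [PartialOrder P] [Finite P]
    (P' : Set P) (hconv : IsConvex P')
    (M : ↥P' ⥤ ModuleCat.{0} k) (hM : PointwiseFinite k M) :
    (∀ n : ℕ, HasResolutionOfLength (IsIntervalDecomposable k) n M ↔
      HasResolutionOfLength (IsIntervalDecomposable k) n (extendByZero k P' hconv M)) ∧
    sInf {n : ℕ | HasResolutionOfLength (IsIntervalDecomposable k) n M} =
      sInf {n : ℕ |
        HasResolutionOfLength (IsIntervalDecomposable k) n (extendByZero k P' hconv M)} :=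
  intervalResolution_extendByZero_general k P P' hconv M
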